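/- Let n ≥ 2, let A and M be two distinct letters, and let 1 ≤ k ≤ n/2. Let w = A^k M^{n-k} be the word of length n whose first k letters equal A and whose remaining n−k letters equal M. Then f(w) = max{2(n−k)+1, 4k}. -/

import Mathlib

/-!
A row or column containing `w = A^k M^(n-k)` reads it in one of two directions, and its `A`s then
occupy one of two disjoint "fronts" of `k` positions: the first `k` or the last `k`. Where a row
and a column containing `w` cross they show the same letter, so one crossing in `A` confines all
rows of a direction to a front, and one crossing in `M` confines them to the complement of a front.
The few resulting cases bound the number of rows plus columns by `max (2(n-k)) (4k)`, and by
`2(n-k)` when the main diagonal contains `w` as well; when both diagonals contain `w`, all rows or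
all columns lie in the `n - 2k` middle positions. Reversing the columns turns the anti-diagonal
into the main diagonal. The grid `w (min i j)` attains `2(n-k)+1`, and the grid carrying `A` on the
two diagonal `k × k` corner blocks attains `4k`.
-/

namespace WordGrid

variable {α : Type*}

/-- The `i`-th row of the grid `G` contains the word `w` (forwards or backwards). -/
def rowC {n : ℕ} (w : Fin n → α) (G : Fin n → Fin n → α) (i : Fin n) : Prop :=
  (∀ j, G i j = w j) ∨ (∀ j, G i j = w j.rev)

/-- The `i`-th column of the grid `G` contains the word `w` (forwards or backwards). -/
def colC {n : ℕ} (w : Fin n → α) (G : Fin n → Fin n → α) (i : Fin n) : Prop :=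
  (∀ j, G j i = w j) ∨ (∀ j, G j i = w j.rev)

/-- The main diagonal of the grid `G` contains the word `w`. -/
def diagC {n : ℕ} (w : Fin n → α) (G : Fin n → Fin n → α) : Prop :=
  (∀ j, G j j = w j) ∨ (∀ j, G j j = w j.rev)

/-- The anti-diagonal of the grid `G` contains the word `w`. -/
def adiagC {n : ℕ} (w : Fin n → α) (G : Fin n → Fin n → α) : Prop :=
  (∀ j, G j j.rev = w j) ∨ (∀ j, G j j.rev = w j.rev)

open Classical in
/-- `f(w,G)`: the number of rows, columns and diagonals of `G` containing `w`. -/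
noncomputable def count {n : ℕ} (w : Fin n → α) (G : Fin n → Fin n → α) : ℕ :=
  {i | rowC w G i}.ncard + {i | colC w G i}.ncard
    + (if diagC w G then 1 else 0) + (if adiagC w G then 1 else 0)

/-- `f(w)`: the maximum of `f(w,G)` over all `n`-grids `G`. -/
noncomputable def fword {n : ℕ} (w : Fin n → α) : ℕ :=
  sSup {m | ∃ G : Fin n → Fin n → α, count w G = m}

section Front

variable {n k : ℕ}

def orient (d : Bool) (x : Fin n) : Fin n := bif d then x else x.rev

@[simp] lemma orient_true (x : Fin n) : orient true x = x := rfl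

@[simp] lemma orient_false (x : Fin n) : orient false x = x.rev := rfl

lemma orient_rev (d : Bool) (x : Fin n) : orient d x.rev = orient (!d) x := by
  cases d <;> simp

/-- The positions at which `A^k M^(n-k)`, read in direction `d`, show the letter `A`. -/
def front (k : ℕ) (d : Bool) : Set (Fin n) := {x | (orient d x : ℕ) < k}

def middle (k : ℕ) : Set (Fin n) := (front k true ∪ front k false)ᶜ

lemma ncard_le_card_fin (s : Set (Fin n)) : s.ncard ≤ n := by
  simpa using Set.ncard_le_card s

lemma ncard_preimage_rev (s : Set (Fin n)) : (Fin.rev ⁻¹' s).ncard = s.ncard :=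
  Set.ncard_preimage_of_injective_subset_range Fin.rev_injective
    (by simp [Fin.rev_surjective.range_eq])

lemma ncard_front (hk : k ≤ n) (d : Bool) : (front k d : Set (Fin n)).ncard = k := by
  have htrue : (front k true : Set (Fin n)).ncard = k := by
    have h := Fin.card_filter_val_lt (n := n) (m := k)
    rw [min_eq_right hk] at h
    refine Eq.trans ?_ h
    rw [← Set.ncard_coe_finset]
    congr
    ext
    simp [front]
  cases d
  · exact (ncard_preimage_rev (front k true)).trans htrue
  · exact htrue

lemma ncard_compl_front (hk : k ≤ n) (d : Bool) : (front k d : Set (Fin n))ᶜ.ncard = n - k := by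
  rw [Set.ncard_compl, ncard_front hk, Nat.card_eq_fintype_card, Fintype.card_fin]

lemma disjoint_front (hkn : 2 * k ≤ n) (d : Bool) :
    Disjoint (front k d : Set (Fin n)) (front k (!d)) := by
  rw [Set.disjoint_left]
  intro x hx hx'
  cases d <;> simp only [front, Set.mem_ofPred_eq, orient_true, orient_false, Fin.val_rev,
    Bool.not_true, Bool.not_false] at hx hx' <;> omega

lemma notMem_front_not (hkn : 2 * k ≤ n) {d : Bool} {x : Fin n} (hx : x ∈ front k d) :
    x ∉ front k (!d) :=
  Set.disjoint_left.1 (disjoint_front hkn d) hx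

lemma ncard_front_union (hkn : 2 * k ≤ n) :
    (front k true ∪ front k false : Set (Fin n)).ncard = 2 * k := by
  rw [Set.ncard_union_eq (by simpa using disjoint_front hkn true), ncard_front (by omega),
    ncard_front (by omega), two_mul]

lemma ncard_middle (hkn : 2 * k ≤ n) : (middle k : Set (Fin n)).ncard = n - 2 * k := by
  rw [middle, Set.ncard_compl, ncard_front_union hkn, Nat.card_eq_fintype_card, Fintype.card_fin]

lemma ncard_le_of_subset_front (hk : k ≤ n) {d : Bool} {s : Set (Fin n)} (hs : s ⊆ front k d) :
    s.ncard ≤ k :=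
  (Set.ncard_le_ncard hs).trans (ncard_front hk d).le

lemma ncard_le_of_subset_compl_front (hk : k ≤ n) {d : Bool} {s : Set (Fin n)}
    (hs : s ⊆ (front k d)ᶜ) : s.ncard ≤ n - k :=
  (Set.ncard_le_ncard hs).trans (ncard_compl_front hk d).le

lemma ncard_le_of_subset_middle (hkn : 2 * k ≤ n) {s : Set (Fin n)} (hs : s ⊆ middle k) :
    s.ncard ≤ n - 2 * k :=
  (Set.ncard_le_ncard hs).trans (ncard_middle hkn).le

lemma mem_middle_of_iff (hkn : 2 * k ≤ n) {d : Bool} {x : Fin n}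
    (h : x ∈ front k d ↔ x ∈ front k (!d)) : x ∈ middle k := by
  have hx : x ∉ front k d := fun hx => notMem_front_not hkn hx (h.1 hx)
  cases d <;> simp_all [middle]

end Front

section Word

variable {n k : ℕ} {A M : α} {w : Fin n → α}
  (hw : ∀ i : Fin n, w i = if (i : ℕ) < k then A else M)
include hw

lemma apply_orient_of_mem {d : Bool} {x : Fin n} (hx : x ∈ front k d) : w (orient d x) = A := by
  rw [hw]; exact if_pos hx

lemma apply_orient_of_notMem {d : Bool} {x : Fin n} (hx : x ∉ front k d) :
    w (orient d x) = M := by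
  rw [hw]; exact if_neg hx

lemma apply_eq_apply_iff (hAM : A ≠ M) {x y : Fin n} :
    w x = w y ↔ ((x : ℕ) < k ↔ (y : ℕ) < k) := by
  rw [hw, hw]
  split_ifs with hx hy hy <;> simp [hx, hy, hAM, hAM.symm]

lemma apply_ne_apply_rev (hAM : A ≠ M) (hkn : 2 * k ≤ n) {x : Fin n} (hx : (x : ℕ) < k) :
    w x ≠ w x.rev := by
  rw [Ne, apply_eq_apply_iff hw hAM, Fin.val_rev]
  omega

lemma apply_orient_eq_iff (hAM : A ≠ M) {d e : Bool} {x y : Fin n} :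
    w (orient d x) = w (orient e y) ↔ (x ∈ front k d ↔ y ∈ front k e) :=
  apply_eq_apply_iff hw hAM

end Word

section Configuration

variable {n k : ℕ} {R C : Bool → Set (Fin n)}

lemma union_eq_union_not {β : Type*} (R : Bool → Set β) (d : Bool) :
    R true ∪ R false = R d ∪ R (!d) := by
  cases d <;> simp [Set.union_comm]

lemma compl_front_inter_compl_front_not (e : Bool) :
    (front k e : Set (Fin n))ᶜ ∩ (front k (!e))ᶜ = middle k := by
  cases e <;> simp [middle, Set.compl_union, Set.inter_comm]

/-- Row `i ∈ R d` (carrying the word in direction `d`) and column `j ∈ C e` read the same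
letter in their common cell `(i, j)`. -/
def Compatible (k : ℕ) (R C : Bool → Set (Fin n)) : Prop :=
  ∀ d e, ∀ i ∈ R d, ∀ j ∈ C e, (i ∈ front k e ↔ j ∈ front k d)

/-- Agreement with a diagonal carrying the word in direction `g`, in the cell `(i, i)`. For the
anti-diagonal the cell is `(i, n - 1 - i)`, which row `i` reads at position `n - 1 - i`, that is,
in the opposite direction. -/
def DiagCompatible (k : ℕ) (R : Bool → Set (Fin n)) (g : Bool) : Prop :=
  ∀ d, ∀ i ∈ R d, (i ∈ front k d ↔ i ∈ front k g)

def AntidiagCompatible (k : ℕ) (R : Bool → Set (Fin n)) (h : Bool) : Prop :=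
  ∀ d, ∀ i ∈ R d, (i ∈ front k (!d) ↔ i ∈ front k h)

lemma Compatible.symm (h : Compatible k R C) : Compatible k C R :=
  fun d e j hj i hi => (h e d i hi j hj).symm

section
variable {i j : Fin n} {d e : Bool}

lemma Compatible.subset_front (h : Compatible k R C) (hj : j ∈ C e) (hjd : j ∈ front k d) :
    R d ⊆ front k e :=
  fun x hx => (h d e x hx j hj).2 hjd

lemma Compatible.subset_compl_front (h : Compatible k R C) (hj : j ∈ C e)
    (hjd : j ∉ front k d) : R d ⊆ (front k e)ᶜ :=
  fun x hx hxe => hjd ((h d e x hx j hj).1 hxe)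

lemma Compatible.ncard_add_ncard_le_of_meet (h : Compatible k R C) (hkn : 2 * k ≤ n)
    (hi : i ∈ R d) (hj : j ∈ C e) (hie : i ∈ front k e) :
    (R true ∪ R false).ncard + (C true ∪ C false).ncard ≤ max (2 * (n - k)) (4 * k) := by
  have hk : k ≤ n := by omega
  have hjd : j ∈ front k d := (h d e i hi j hj).1 hie
  have hRd := h.subset_front hj hjd
  have hCe := h.symm.subset_front hi hie
  have hRd' := h.subset_compl_front hj (notMem_front_not hkn hjd)
  have hCe' := h.symm.subset_compl_front hi (notMem_front_not hkn hie)
  have hR := (union_eq_union_not R d).symm ▸ Set.ncard_union_le (R d) (R (!d))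
  have hC := (union_eq_union_not C e).symm ▸ Set.ncard_union_le (C e) (C (!e))
  have := ncard_le_of_subset_front hk hRd
  have := ncard_le_of_subset_front hk hCe
  obtain hR' | ⟨i', hi'⟩ := (R (!d)).eq_empty_or_nonempty
  · have := ncard_le_card_fin (C true ∪ C false)
    simp only [hR', Set.ncard_empty] at hR
    omega
  obtain hC' | ⟨j', hj'⟩ := (C (!e)).eq_empty_or_nonempty
  · have := ncard_le_card_fin (R true ∪ R false)
    simp only [hC', Set.ncard_empty] at hC
    omega
  by_cases hie' : i' ∈ front k (!e)
  · have hjd' : j' ∈ front k (!d) := (h _ _ i' hi' j' hj').1 hie'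
    have := ncard_le_of_subset_front hk (h.subset_front hj' hjd')
    have := ncard_le_of_subset_front hk (h.symm.subset_front hi' hie')
    omega
  · have hjd' : j' ∉ front k (!d) := fun hjd' => hie' ((h _ _ i' hi' j' hj').2 hjd')
    have := ncard_le_of_subset_middle hkn (compl_front_inter_compl_front_not e ▸
      Set.subset_inter hRd' (h.subset_compl_front hj' hjd'))
    have := ncard_le_of_subset_middle hkn (compl_front_inter_compl_front_not d ▸
      Set.subset_inter hCe' (h.symm.subset_compl_front hi' hie'))
    omega

end

lemma ncard_le_of_forall_notMem_front (hk : k ≤ n)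
    (hM : ∀ d e, ∀ i ∈ R d, ∀ j ∈ C e, i ∉ front k e) :
    (C true ∪ C false).ncard = 0 ∨ (R true ∪ R false).ncard ≤ n - k := by
  obtain h0 | ⟨j, hj⟩ := (C true ∪ C false).eq_empty_or_nonempty
  · exact .inl (by rw [h0, Set.ncard_empty])
  obtain ⟨e, hj⟩ : ∃ e, j ∈ C e := hj.elim (⟨true, ·⟩) (⟨false, ·⟩)
  exact .inr <| ncard_le_of_subset_compl_front hk
    (Set.union_subset (fun x hx => hM _ _ x hx j hj) (fun x hx => hM _ _ x hx j hj))

theorem Compatible.ncard_add_ncard_le (h : Compatible k R C) (hkn : 2 * k ≤ n) :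
    (R true ∪ R false).ncard + (C true ∪ C false).ncard ≤ max (2 * (n - k)) (4 * k) := by
  by_cases hA : ∃ d e, ∃ i ∈ R d, ∃ j ∈ C e, i ∈ front k e
  · obtain ⟨d, e, i, hi, j, hj, hie⟩ := hA
    exact h.ncard_add_ncard_le_of_meet hkn hi hj hie
  push Not at hA
  have hR := ncard_le_of_forall_notMem_front (by omega) hA
  have hC := ncard_le_of_forall_notMem_front (R := C) (C := R) (by omega)
    fun e d j hj i hi hjd => hA d e i hi j hj ((h d e i hi j hj).2 hjd)
  have := ncard_le_card_fin (R true ∪ R false)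
  have := ncard_le_card_fin (C true ∪ C false)
  omega

lemma Compatible.union_subset_compl_front_of_diag (h : Compatible k R C) (hkn : 2 * k ≤ n)
    {g : Bool} (hR : DiagCompatible k R g) (hC : DiagCompatible k C g)
    (hX : ∃ d, ∃ i ∈ R d, i ∈ front k g) : C true ∪ C false ⊆ (front k (!g))ᶜ := by
  obtain ⟨d, i, hi, hig⟩ := hX
  have hid : i ∈ front k d := (hR d i hi).2 hig
  have hdg : d = g := by
    by_contra hne
    exact notMem_front_not hkn hig (by simpa [Bool.eq_not_of_ne hne] using hid)
  subst hdg
  have key : ∀ e, C e ⊆ (front k (!d))ᶜ := fun e y hy hy' => by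
    have hyd : y ∉ front k d := fun hyd => notMem_front_not hkn hyd hy'
    cases Bool.eq_or_eq_not e d with
    | inl hed => subst hed; exact hyd ((h e e i hi y hy).1 hid)
    | inr hed => subst hed; exact hyd ((hC _ y hy).1 (by simpa using hy'))
  exact Set.union_subset (key true) (key false)

theorem Compatible.ncard_add_ncard_le_of_diag (h : Compatible k R C) (hkn : 2 * k ≤ n)
    {g : Bool} (hR : DiagCompatible k R g) (hC : DiagCompatible k C g) :
    (R true ∪ R false).ncard + (C true ∪ C false).ncard ≤ 2 * (n - k) := by
  have hk : k ≤ n := by omega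
  have := ncard_le_card_fin (R true ∪ R false)
  have := ncard_le_card_fin (C true ∪ C false)
  by_cases hX : ∃ d, ∃ i ∈ R d, i ∈ front k g <;> by_cases hY : ∃ e, ∃ j ∈ C e, j ∈ front k g
  · have := ncard_le_of_subset_compl_front hk (h.union_subset_compl_front_of_diag hkn hR hC hX)
    have := ncard_le_of_subset_compl_front hk
      (h.symm.union_subset_compl_front_of_diag hkn hC hR hY)
    omega
  · push Not at hY
    have := ncard_le_of_subset_middle hkn (compl_front_inter_compl_front_not g ▸
      Set.subset_inter (Set.union_subset (hY true) (hY false))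
        (h.union_subset_compl_front_of_diag hkn hR hC hX))
    omega
  · push Not at hX
    have := ncard_le_of_subset_middle hkn (compl_front_inter_compl_front_not g ▸
      Set.subset_inter (Set.union_subset (hX true) (hX false))
        (h.symm.union_subset_compl_front_of_diag hkn hC hR hY))
    omega
  · push Not at hX hY
    have := ncard_le_of_subset_compl_front hk (Set.union_subset (hX true) (hX false))
    have := ncard_le_of_subset_compl_front hk (Set.union_subset (hY true) (hY false))
    omega

lemma union_subset_middle_of_diag_of_antidiag (hkn : 2 * k ≤ n) {g g' : Bool}
    (hRg : DiagCompatible k R g) (hCg : DiagCompatible k C g)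
    (hRg' : AntidiagCompatible k R g') (hCg' : AntidiagCompatible k C (!g')) :
    R true ∪ R false ⊆ middle k ∨ C true ∪ C false ⊆ middle k := by
  cases Bool.eq_or_eq_not g g' with
  | inl hgg' =>
    subst hgg'
    have hm := fun d x hx => mem_middle_of_iff hkn ((hRg d x hx).trans (hRg' d x hx).symm)
    exact .inl (Set.union_subset (hm true) (hm false))
  | inr hgg' =>
    subst hgg'
    have hm := fun e y hy => mem_middle_of_iff hkn ((hCg e y hy).trans (hCg' e y hy).symm)
    exact .inr (Set.union_subset (hm true) (hm false))

lemma Compatible.ncard_add_ncard_add_two_le (h : Compatible k R C) (hk : 1 ≤ k)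
    (hkn : 2 * k ≤ n) (hRm : R true ∪ R false ⊆ middle k) :
    (R true ∪ R false).ncard + (C true ∪ C false).ncard + 2 ≤ max (2 * (n - k) + 1) (4 * k) := by
  have := ncard_le_of_subset_middle hkn hRm
  have := ncard_le_card_fin (C true ∪ C false)
  obtain h0 | ⟨i, hi⟩ := (R true ∪ R false).eq_empty_or_nonempty
  · rw [h0, Set.ncard_empty]
    omega
  have hie : ∀ e, i ∉ front k e := by
    have := hRm hi
    simp only [middle, Set.mem_compl_iff, Set.mem_union, not_or] at this
    exact fun e => by cases e <;> simp [this]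
  obtain ⟨d, hi⟩ : ∃ d, i ∈ R d := hi.elim (⟨true, ·⟩) (⟨false, ·⟩)
  have := ncard_le_of_subset_compl_front (by omega) (Set.union_subset
    (h.symm.subset_compl_front hi (hie true)) (h.symm.subset_compl_front hi (hie false)))
  omega

end Configuration

section Grid

variable {n k : ℕ} {A M : α} {w : Fin n → α} {G : Fin n → Fin n → α}

def rowsIn (w : Fin n → α) (G : Fin n → Fin n → α) (d : Bool) : Set (Fin n) :=
  {i | ∀ j, G i j = w (orient d j)}

def colsIn (w : Fin n → α) (G : Fin n → Fin n → α) (e : Bool) : Set (Fin n) :=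
  {j | ∀ i, G i j = w (orient e i)}

lemma setOf_rowC : {i | rowC w G i} = rowsIn w G true ∪ rowsIn w G false := rfl

lemma setOf_colC : {j | colC w G j} = colsIn w G true ∪ colsIn w G false := rfl

lemma diagC_iff : diagC w G ↔ ∃ g, ∀ x, G x x = w (orient g x) := by
  simp [diagC, Bool.exists_bool, or_comm]

lemma adiagC_iff : adiagC w G ↔ ∃ g, ∀ x, G x x.rev = w (orient g x) := by
  simp [adiagC, Bool.exists_bool, or_comm]

lemma diagC_reflect_iff : diagC w (fun i j => G i j.rev) ↔ adiagC w G := Iff.rfl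

lemma adiagC_reflect_iff : adiagC w (fun i j => G i j.rev) ↔ diagC w G := by
  simp [adiagC, diagC]

lemma rowC_reflect_iff (i : Fin n) : rowC w (fun i j => G i j.rev) i ↔ rowC w G i := by
  simp only [rowC, or_comm, Fin.rev_surjective.forall (p := fun j => G i j = w j),
    Fin.rev_surjective.forall (p := fun j => G i j = w j.rev), Fin.rev_rev]

lemma count_reflect : count w (fun i j => G i j.rev) = count w G := by
  have hrow : {i | rowC w (fun i j => G i j.rev) i} = {i | rowC w G i} :=
    Set.ext rowC_reflect_iff
  have hcol : {j | colC w (fun i j => G i j.rev) j} = Fin.rev ⁻¹' {j | colC w G j} := rfl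
  have hD : diagC w (fun i j => G i j.rev) = adiagC w G := propext diagC_reflect_iff
  have hA : adiagC w (fun i j => G i j.rev) = diagC w G := propext adiagC_reflect_iff
  unfold count
  rw [hrow, hcol, ncard_preimage_rev, hD, hA]
  omega

variable (hw : ∀ i : Fin n, w i = if (i : ℕ) < k then A else M) (hAM : A ≠ M)
include hw hAM

lemma compatible_rowsIn_colsIn : Compatible k (rowsIn w G) (colsIn w G) :=
  fun _ _ i hi j hj => (apply_orient_eq_iff hw hAM).1 ((hj i).symm.trans (hi j))

lemma diagCompatible_rowsIn {g : Bool} (hg : ∀ x, G x x = w (orient g x)) :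
    DiagCompatible k (rowsIn w G) g :=
  fun _ i hi => (apply_orient_eq_iff hw hAM).1 ((hi i).symm.trans (hg i))

lemma diagCompatible_colsIn {g : Bool} (hg : ∀ x, G x x = w (orient g x)) :
    DiagCompatible k (colsIn w G) g :=
  fun _ j hj => (apply_orient_eq_iff hw hAM).1 ((hj j).symm.trans (hg j))

lemma antidiagCompatible_rowsIn {g : Bool} (hg : ∀ x, G x x.rev = w (orient g x)) :
    AntidiagCompatible k (rowsIn w G) g := fun d i hi =>
  (apply_orient_eq_iff hw hAM).1 (orient_rev d i ▸ (hi i.rev).symm.trans (hg i))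

lemma antidiagCompatible_colsIn {g : Bool} (hg : ∀ x, G x x.rev = w (orient g x)) :
    AntidiagCompatible k (colsIn w G) (!g) := fun e j hj => by
  have := hg j.rev
  rw [Fin.rev_rev, orient_rev] at this
  exact (apply_orient_eq_iff hw hAM).1 (orient_rev e j ▸ (hj j.rev).symm.trans this)

lemma count_le_of_not_adiagC (hkn : 2 * k ≤ n) (hA : ¬ adiagC w G) :
    count w G ≤ max (2 * (n - k) + 1) (4 * k) := by
  have hRC := compatible_rowsIn_colsIn (G := G) hw hAM
  unfold count
  rw [if_neg hA, setOf_rowC, setOf_colC]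
  split_ifs with hD
  · obtain ⟨g, hg⟩ := diagC_iff.1 hD
    have := hRC.ncard_add_ncard_le_of_diag hkn (diagCompatible_rowsIn hw hAM hg)
      (diagCompatible_colsIn hw hAM hg)
    omega
  · have := hRC.ncard_add_ncard_le hkn
    omega

lemma count_le_of_diagC_of_adiagC (hk : 1 ≤ k) (hkn : 2 * k ≤ n) (hD : diagC w G)
    (hA : adiagC w G) : count w G ≤ max (2 * (n - k) + 1) (4 * k) := by
  have hRC := compatible_rowsIn_colsIn (G := G) hw hAM
  obtain ⟨g, hg⟩ := diagC_iff.1 hD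
  obtain ⟨g', hg'⟩ := adiagC_iff.1 hA
  have := (union_subset_middle_of_diag_of_antidiag hkn (diagCompatible_rowsIn hw hAM hg)
    (diagCompatible_colsIn hw hAM hg) (antidiagCompatible_rowsIn hw hAM hg')
    (antidiagCompatible_colsIn hw hAM hg')).elim
    (hRC.ncard_add_ncard_add_two_le hk hkn) fun hCm => by
      have := hRC.symm.ncard_add_ncard_add_two_le hk hkn hCm
      omega
  unfold count
  rw [if_pos hD, if_pos hA, setOf_rowC, setOf_colC]
  omega

theorem count_le (hk : 1 ≤ k) (hkn : 2 * k ≤ n) :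
    count w G ≤ max (2 * (n - k) + 1) (4 * k) := by
  by_cases hA : adiagC w G
  · by_cases hD : diagC w G
    · exact count_le_of_diagC_of_adiagC hw hAM hk hkn hD hA
    · rw [← count_reflect]
      exact count_le_of_not_adiagC hw hAM hkn (adiagC_reflect_iff.not.2 hD)
  · exact count_le_of_not_adiagC hw hAM hkn hA

end Grid

section Construction

variable {n k : ℕ} {A M : α} {w : Fin n → α} {G : Fin n → Fin n → α}

lemma not_contains_of_apply_eq_apply_rev {f : Fin n → α} {x : Fin n} (hx : w x ≠ w x.rev)
    (hf : f x = f x.rev) : ¬ ((∀ j, f j = w j) ∨ (∀ j, f j = w j.rev)) := by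
  rintro (h | h)
  · exact hx (by rw [← h, ← h, hf])
  · exact hx <| calc
      w x = f x.rev := by rw [h, Fin.rev_rev]
      _ = f x := hf.symm
      _ = w x.rev := h x

lemma not_adiagC_of_symm {x : Fin n} (hx : w x ≠ w x.rev) (hG : ∀ i j, G i j = G j i) :
    ¬ adiagC w G :=
  not_contains_of_apply_eq_apply_rev hx (by rw [Fin.rev_rev, hG])

lemma setOf_colC_of_symm (hG : ∀ i j, G i j = G j i) : {j | colC w G j} = {i | rowC w G i} := by
  simp only [colC, rowC, hG]

variable (hw : ∀ i : Fin n, w i = if (i : ℕ) < k then A else M) (hAM : A ≠ M)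
include hw hAM

theorem exists_count_eq_two_mul_sub_add_one (hk : 1 ≤ k) (hkn : 2 * k ≤ n) :
    ∃ G : Fin n → Fin n → α, count w G = 2 * (n - k) + 1 := by
  let z : Fin n := ⟨0, by omega⟩
  have hz : w z ≠ w z.rev := apply_ne_apply_rev hw hAM hkn hk
  refine ⟨fun i j => w (min i j), ?_⟩
  have hrow : {i | rowC w (fun i j => w (min i j)) i} = (front k true)ᶜ := by
    ext i
    simp only [Set.mem_ofPred_eq, Set.mem_compl_iff, front, orient_true, not_lt]
    constructor
    · intro hi
      by_contra hik
      refine not_contains_of_apply_eq_apply_rev hz ?_ hi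
      have hzi : z ≤ i := Nat.zero_le _
      have hiz : i ≤ z.rev := Fin.le_def.2 (by rw [Fin.val_rev]; simp only [z]; omega)
      dsimp only
      rw [min_eq_right hzi, min_eq_left hiz, apply_eq_apply_iff hw hAM]
      simp only [z]
      omega
    · intro hik
      left
      intro j
      dsimp only
      rcases le_total i j with hij | hij
      · rw [min_eq_left hij, apply_eq_apply_iff hw hAM]
        rw [Fin.le_def] at hij
        omega
      · rw [min_eq_right hij]
  have hD : diagC w (fun i j => w (min i j)) := .inl fun j => congrArg w (min_self j)
  unfold count
  rw [setOf_colC_of_symm (fun i j => by rw [min_comm]), hrow, ncard_compl_front (by omega),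
    if_pos hD, if_neg (not_adiagC_of_symm hz fun i j => by rw [min_comm])]
  omega

theorem exists_count_eq_four_mul (hk : 1 ≤ k) (hkn : 2 * k ≤ n) :
    ∃ G : Fin n → Fin n → α, count w G = 4 * k := by
  classical
  let z : Fin n := ⟨0, by omega⟩
  have hz : w z ≠ w z.rev := apply_ne_apply_rev hw hAM hkn hk
  let G : Fin n → Fin n → α := fun i j => if ∃ d, i ∈ front k d ∧ j ∈ front k d then A else M
  refine ⟨G, ?_⟩
  have hG : ∀ i j, G i j = G j i := by simp only [G, and_comm, implies_true]
  have hrows : ∀ d, front k d ⊆ rowsIn w G d := fun d i hi j => by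
    by_cases hj : j ∈ front k d
    · rw [apply_orient_of_mem hw hj]
      exact if_pos ⟨d, hi, hj⟩
    · rw [apply_orient_of_notMem hw hj]
      refine if_neg ?_
      rintro ⟨d', hid', hjd'⟩
      cases Bool.eq_or_eq_not d' d with
      | inl h => exact hj (h ▸ hjd')
      | inr h => exact notMem_front_not hkn hi (h ▸ hid')
  have hrow : {i | rowC w G i} = front k true ∪ front k false := by
    refine Set.Subset.antisymm (fun i hi => ?_) (Set.union_subset_union (hrows true) (hrows false))
    by_contra hi'
    have hM : ∀ j, G i j = M := fun j => if_neg fun ⟨d, hid, _⟩ => hi' (by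
      cases d
      exacts [.inr hid, .inl hid])
    exact not_contains_of_apply_eq_apply_rev hz (by rw [hM, hM]) hi
  have hD : ¬ diagC w G := by
    refine not_contains_of_apply_eq_apply_rev hz ?_
    have hz1 : z ∈ front k true := by simp [front, z]; omega
    have hz2 : z.rev ∈ front k false := by
      simpa only [front, Set.mem_ofPred_eq, orient_true, orient_false, Fin.rev_rev] using hz1
    exact (if_pos ⟨true, hz1, hz1⟩).trans (if_pos ⟨false, hz2, hz2⟩).symm
  unfold count
  rw [setOf_colC_of_symm hG, hrow, ncard_front_union hkn, if_neg hD,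
    if_neg (not_adiagC_of_symm hz hG)]
  omega

end Construction

theorem fword_AkMnk_general {n k : ℕ} (hk : 1 ≤ k) (hkn : 2 * k ≤ n)
    (A M : α) (hAM : A ≠ M)
    (w : Fin n → α) (hw : ∀ i : Fin n, w i = if (i : ℕ) < k then A else M) :
    fword w = max (2 * (n - k) + 1) (4 * k) := by
  refine IsGreatest.csSup_eq ⟨?_, ?_⟩
  · rcases le_total (4 * k) (2 * (n - k) + 1) with h | h
    · rw [max_eq_left h]
      exact exists_count_eq_two_mul_sub_add_one hw hAM hk hkn
    · rw [max_eq_right h]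
      exact exists_count_eq_four_mul hw hAM hk hkn
  · rintro m ⟨G, rfl⟩
    exact count_le hw hAM hk hkn

theorem fword_AkMnk {n k : ℕ} (hn : 2 ≤ n) (hk : 1 ≤ k) (hkn : 2 * k ≤ n)
    (A M : α) (hAM : A ≠ M)
    (w : Fin n → α) (hw : ∀ i : Fin n, w i = if (i : ℕ) < k then A else M) :
    fword w = max (2 * (n - k) + 1) (4 * k) :=
  fword_AkMnk_general hk hkn A M hAM w hw

end WordGrid
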